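/- Let B be a separable unital C*-algebra, let C ⊆ B be a unital C*-subalgebra (containing the unit of B), and let E : B → C be a linear map such that τ(b) = τ(E(b)) for every tracial state τ of B and every b ∈ B. Let A be a unital C*-algebra with T(A) ≠ ∅, let λ : T(A) → T(B) be a surjective continuous affine map, and let φ : C → A be a unital injective *-homomorphism such that τ(φ(c)) = λ(τ)(c) for all c ∈ C and all τ ∈ T(A). Suppose ψ_n : B → A (n ∈ ℕ) are unital completely positive linear contractions such that lim_{n→∞} ‖ψ_n(ab) − ψ_n(a)ψ_n(b)‖ = 0 for all a, b ∈ B, and lim_{n→∞} ‖ψ_n(c) − φ(c)‖ = 0 for all c ∈ C. Then for every ε > 0 and every finite subset F ⊆ B there exists N ≥ 1 such that for all n ≥ N and all a ∈ F, sup_{τ ∈ T(A)} |τ(ψ_n(a)) − λ(τ)(a)| < ε. -/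

import Mathlib

/-!
Suppose the estimate fails for some `a`. Then there are `n_k → ∞` and tracial states `τ_k` of `A`
with `ε ≤ ‖τ_k (ψ_{n_k} a) - Λ τ_k a‖`. By Banach–Alaoglu, along an ultrafilter (the weak* topology
need not be sequentially compact) the states `τ_k ∘ ψ_{n_k}` converge to a state `σ` of `B` and the
tracial states `Λ τ_k` to a tracial state `μ`. Asymptotic multiplicativity of `ψ` makes `σ` tracial,
and `ψ_n → φ` on `S` together with `τ ∘ φ = Λ τ` on `S` makes `σ` and `μ` agree on `S`. Since
tracial states do not see `E`, `σ a = σ (E a) = μ (E a) = μ a`, a contradiction.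
-/

open scoped ComplexOrder
open Matrix

/-- A state on a unital C*-algebra `A`, as an element of the weak* dual. -/
def IsStateW {A : Type*} [NormedRing A] [NormedAlgebra ℂ A] [PartialOrder A]
    (ρ : WeakDual ℂ A) : Prop :=
  ρ 1 = 1 ∧ ∀ a : A, 0 ≤ a → 0 ≤ ρ a

/-- A tracial state on a unital C*-algebra, as an element of the weak* dual. -/
def IsTracialStateW {A : Type*} [NormedRing A] [NormedAlgebra ℂ A] [PartialOrder A]
    (ρ : WeakDual ℂ A) : Prop :=
  IsStateW ρ ∧ ∀ a b : A, ρ (a * b) = ρ (b * a)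

/-- Complete positivity, via positivity of the induced maps on matrix algebras; a matrix over
a C*-algebra is positive exactly when it is of the form `Nᴴ * N`. -/
def IsCompletelyPositive {A B : Type*} [NonUnitalNonAssocSemiring A] [StarRing A]
    [NonUnitalNonAssocSemiring B] [StarRing B] (Φ : A → B) : Prop :=
  ∀ (n : ℕ) (M : Matrix (Fin n) (Fin n) A),
    (∃ N : Matrix (Fin n) (Fin n) A, M = Nᴴ * N) →
    ∃ N' : Matrix (Fin n) (Fin n) B, M.map Φ = N'ᴴ * N'

open Filter Topology

namespace WeakDual

variable {𝕜 E F : Type*} [NormedField 𝕜] [NormedAddCommGroup E] [NormedSpace 𝕜 E]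
  [NormedAddCommGroup F] [NormedSpace 𝕜 F]

noncomputable def precomp (τ : WeakDual 𝕜 F) (Φ : E →L[𝕜] F) : WeakDual 𝕜 E :=
  StrongDual.toWeakDual ((toStrongDual τ).comp Φ)

@[simp]
lemma precomp_apply (τ : WeakDual 𝕜 F) (Φ : E →L[𝕜] F) (x : E) : τ.precomp Φ x = τ (Φ x) :=
  rfl

end WeakDual

lemma Filter.Tendsto.weakDual_eval {ι 𝕜 E : Type*} [NormedField 𝕜] [NormedAddCommGroup E]
    [NormedSpace 𝕜 E] {l : Filter ι} {u : ι → WeakDual 𝕜 E} {σ : WeakDual 𝕜 E}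
    (h : Tendsto u l (𝓝 σ)) (x : E) : Tendsto (fun i => u i x) l (𝓝 (σ x)) :=
  ((WeakDual.eval_continuous x).tendsto σ).comp h

lemma IsCompact.exists_tendsto_ultrafilter {X ι : Type*} [TopologicalSpace X] {s : Set X}
    (hs : IsCompact s) (𝒰 : Ultrafilter ι) {u : ι → X} (hu : ∀ i, u i ∈ s) :
    ∃ x ∈ s, Tendsto u 𝒰 (𝓝 x) :=
  hs.ultrafilter_le_nhds' (𝒰.map u) (Ultrafilter.mem_map.2 (univ_mem' hu))

section NormedAlgebra

variable {A B : Type*} [NormedRing A] [NormedAlgebra ℂ A] [PartialOrder A]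
  [NormedRing B] [NormedAlgebra ℂ B] [PartialOrder B]

lemma isClosed_setOf_isStateW : IsClosed {ρ : WeakDual ℂ A | IsStateW ρ} := by
  simp only [IsStateW, Set.ofPred_and, Set.ofPred_forall]
  exact (isClosed_eq (WeakDual.eval_continuous 1) continuous_const).inter
    (isClosed_iInter fun a => isClosed_iInter fun _ =>
      isClosed_le continuous_const (WeakDual.eval_continuous a))

lemma isClosed_setOf_isTracialStateW : IsClosed {ρ : WeakDual ℂ A | IsTracialStateW ρ} := by
  simp only [IsTracialStateW, Set.ofPred_and, Set.ofPred_forall]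
  exact isClosed_setOf_isStateW.inter (isClosed_iInter fun _ => isClosed_iInter fun _ =>
    isClosed_eq (WeakDual.eval_continuous _) (WeakDual.eval_continuous _))

lemma IsStateW.precomp {ρ : WeakDual ℂ A} (hρ : IsStateW ρ) {Φ : B →L[ℂ] A} (hΦ1 : Φ 1 = 1)
    (hΦ : ∀ b, 0 ≤ b → 0 ≤ Φ b) : IsStateW (ρ.precomp Φ) :=
  ⟨by simp [hΦ1, hρ.1], fun b hb => hρ.2 _ (hΦ b hb)⟩

end NormedAlgebra

section CStarAlgebra

variable {A : Type*} [CStarAlgebra A] [PartialOrder A] [StarOrderedRing A]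

lemma IsStateW.norm_apply_le {ρ : WeakDual ℂ A} (hρ : IsStateW ρ) (a : A) :
    ‖ρ a‖ ≤ 4 * ‖a‖ := by
  have h_nonneg (x : A) (hx : 0 ≤ x) : ‖ρ x‖ ≤ ‖x‖ := by
    calc ‖ρ x‖ ≤ ‖ρ 1‖ * ‖x‖ :=
          (PositiveLinearMap.mk₀ (WeakDual.toStrongDual ρ).toLinearMap hρ.2).norm_apply_le_of_nonneg
            x hx
      _ = ‖x‖ := by rw [hρ.1, norm_one, one_mul]
  obtain ⟨x, hx_nonneg, hx_norm, ha⟩ := CStarAlgebra.exists_sum_four_nonneg a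
  calc ‖ρ a‖ = ‖∑ i : Fin 4, Complex.I ^ (i : ℕ) * ρ (x i)‖ := by
        rw [ha, map_sum]; simp only [map_smul, smul_eq_mul]
    _ ≤ ∑ i : Fin 4, ‖ρ (x i)‖ := by
        refine (norm_sum_le _ _).trans_eq ?_
        simp [Complex.norm_I]
    _ ≤ ∑ _i : Fin 4, ‖a‖ := by
        gcongr with i
        exact (h_nonneg _ (hx_nonneg i)).trans (hx_norm i)
    _ = 4 * ‖a‖ := by simp

lemma isCompact_setOf_isStateW : IsCompact {ρ : WeakDual ℂ A | IsStateW ρ} :=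
  (WeakDual.isCompact_closedBall 0 4).of_isClosed_subset isClosed_setOf_isStateW fun ρ hρ => by
    simpa using ContinuousLinearMap.opNorm_le_bound (WeakDual.toStrongDual ρ) (by norm_num)
      hρ.norm_apply_le

lemma isCompact_setOf_isTracialStateW : IsCompact {ρ : WeakDual ℂ A | IsTracialStateW ρ} :=
  isCompact_setOf_isStateW.of_isClosed_subset isClosed_setOf_isTracialStateW fun _ hρ => hρ.1

lemma tendsto_apply_zero_of_isStateW {ι : Type*} {l : Filter ι} {ρ : ι → WeakDual ℂ A}
    (hρ : ∀ i, IsStateW (ρ i)) {x : ι → A} (hx : Tendsto x l (𝓝 0)) :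
    Tendsto (fun i => ρ i (x i)) l (𝓝 0) :=
  squeeze_zero_norm (fun i => (hρ i).norm_apply_le (x i))
    (by simpa using (tendsto_zero_iff_norm_tendsto_zero.1 hx).const_mul 4)

end CStarAlgebra

lemma IsCompletelyPositive.map_nonneg {A B : Type*} [NonUnitalCStarAlgebra B] [PartialOrder B]
    [StarOrderedRing B] [NonUnitalSemiring A] [PartialOrder A] [StarRing A] [StarOrderedRing A]
    {Φ : B → A} (hΦ : IsCompletelyPositive Φ) {b : B} (hb : 0 ≤ b) : 0 ≤ Φ b := by
  obtain ⟨c, rfl⟩ := CStarAlgebra.nonneg_iff_eq_star_mul_self.mp hb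
  obtain ⟨N, hN⟩ := hΦ 1 (Matrix.of fun _ _ => star c * c)
    ⟨Matrix.of fun _ _ => c, by ext i j; simp [Matrix.mul_apply]⟩
  have h00 : Φ (star c * c) = star (N 0 0) * N 0 0 := by
    simpa [Matrix.mul_apply] using congrFun (congrFun hN 0) 0
  exact h00 ▸ star_mul_self_nonneg _

lemma isTracialStateW_of_tendsto_precomp {A B ι : Type*} [CStarAlgebra A] [PartialOrder A]
    [StarOrderedRing A] [CStarAlgebra B] [PartialOrder B] {l : Filter ι} [l.NeBot]
    {τ : ι → WeakDual ℂ A} (hτ : ∀ i, IsTracialStateW (τ i)) {Φ : ι → B →L[ℂ] A}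
    (hΦ : ∀ b c, Tendsto (fun i => Φ i (b * c) - Φ i b * Φ i c) l (𝓝 0))
    {σ : WeakDual ℂ B} (hσ : IsStateW σ)
    (hlim : Tendsto (fun i => (τ i).precomp (Φ i)) l (𝓝 σ)) :
    IsTracialStateW σ := by
  refine ⟨hσ, fun b c => sub_eq_zero.1 (tendsto_nhds_unique
    ((hlim.weakDual_eval (b * c)).sub (hlim.weakDual_eval (c * b))) ?_)⟩
  have hcomm : Tendsto (fun i => Φ i (b * c) - Φ i b * Φ i c - (Φ i (c * b) - Φ i c * Φ i b))
      l (𝓝 0) := by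
    simpa only [sub_zero] using (hΦ b c).sub (hΦ c b)
  refine (tendsto_apply_zero_of_isStateW (fun i => (hτ i).1) hcomm).congr fun i => ?_
  simp only [map_sub, WeakDual.precomp_apply, (hτ i).2 (Φ i b)]
  ring

lemma eventually_forall_norm_apply_sub_lt {A B : Type*} [CStarAlgebra A] [PartialOrder A]
    [StarOrderedRing A] [CStarAlgebra B] [PartialOrder B] [StarOrderedRing B]
    (S : StarSubalgebra ℂ B) (E : B →ₗ[ℂ] B) (hES : ∀ b : B, E b ∈ S)
    (hE : ∀ σ : WeakDual ℂ B, IsTracialStateW σ → ∀ b : B, σ b = σ (E b))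
    (Λ : WeakDual ℂ A → WeakDual ℂ B)
    (hΛ : ∀ τ : WeakDual ℂ A, IsTracialStateW τ → IsTracialStateW (Λ τ))
    (φ : S →⋆ₐ[ℂ] A)
    (hφΛ : ∀ τ : WeakDual ℂ A, IsTracialStateW τ → ∀ c : S, τ (φ c) = Λ τ (c : B))
    (ψ : ℕ → B →L[ℂ] A) (hψ1 : ∀ n, ψ n 1 = 1) (hψpos : ∀ n b, 0 ≤ b → 0 ≤ ψ n b)
    (hψmult : ∀ b c, Tendsto (fun n => ψ n (b * c) - ψ n b * ψ n c) atTop (𝓝 0))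
    (hψφ : ∀ c : S, Tendsto (fun n => ψ n (c : B) - φ c) atTop (𝓝 0))
    (a : B) {ε : ℝ} (hε : 0 < ε) :
    ∀ᶠ n in atTop, ∀ τ : WeakDual ℂ A, IsTracialStateW τ → ‖τ (ψ n a) - Λ τ a‖ < ε := by
  by_contra! h
  obtain ⟨m, hm, hbad⟩ := extraction_of_frequently_atTop h
  choose τ hτ hετ using hbad
  let 𝒰 : Ultrafilter ℕ := .of atTop
  have hm𝒰 : Tendsto m 𝒰 atTop := hm.tendsto_atTop.mono_left (Ultrafilter.of_le _)
  obtain ⟨σ, hσ, hσlim⟩ := isCompact_setOf_isStateW.exists_tendsto_ultrafilter 𝒰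
    (u := fun k => (τ k).precomp (ψ (m k))) fun k => (hτ k).1.precomp (hψ1 _) (hψpos _)
  obtain ⟨μ, hμ, hμlim⟩ := isCompact_setOf_isTracialStateW.exists_tendsto_ultrafilter 𝒰
    (u := fun k => Λ (τ k)) fun k => hΛ _ (hτ k)
  have hσtr : IsTracialStateW σ :=
    isTracialStateW_of_tendsto_precomp hτ (fun b c => (hψmult b c).comp hm𝒰) hσ hσlim
  have hσμ (c : S) : σ c = μ c := by
    refine sub_eq_zero.1 (tendsto_nhds_unique
      ((hσlim.weakDual_eval c).sub (hμlim.weakDual_eval c)) ?_)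
    refine (tendsto_apply_zero_of_isStateW (fun k => (hτ k).1) ((hψφ c).comp hm𝒰)).congr
      fun k => ?_
    simp only [Function.comp_apply, map_sub, WeakDual.precomp_apply, hφΛ _ (hτ k)]
  have hσa : σ a = μ a :=
    calc σ a = σ (E a) := hE σ hσtr a
      _ = μ (E a) := hσμ ⟨E a, hES a⟩
      _ = μ a := (hE μ hμ a).symm
  have hεle : ε ≤ ‖σ a - μ a‖ :=
    ge_of_tendsto ((hσlim.weakDual_eval a).sub (hμlim.weakDual_eval a)).norm
      (Eventually.of_forall hετ)
  rw [hσa, sub_self, norm_zero] at hεle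
  exact hεle.not_gt hε

theorem statement4_general
    {B : Type*} [CStarAlgebra B] [PartialOrder B] [StarOrderedRing B]
    {A : Type*} [CStarAlgebra A] [PartialOrder A] [StarOrderedRing A]
    (S : StarSubalgebra ℂ B)
    (E : B →ₗ[ℂ] B) (hES : ∀ b : B, E b ∈ S)
    (hE : ∀ σ : WeakDual ℂ B, IsTracialStateW σ → ∀ b : B, σ b = σ (E b))
    (Λ : WeakDual ℂ A → WeakDual ℂ B)
    (hΛmaps : ∀ τ : WeakDual ℂ A, IsTracialStateW τ → IsTracialStateW (Λ τ))
    (φ : S →⋆ₐ[ℂ] A)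
    (hφΛ : ∀ τ : WeakDual ℂ A, IsTracialStateW τ → ∀ c : S, τ (φ c) = Λ τ (c : B))
    (ψ : ℕ → B →L[ℂ] A)
    (hψ1 : ∀ n, ψ n 1 = 1)
    (hψcp : ∀ n, IsCompletelyPositive (ψ n))
    (hψmult : ∀ a b : B,
      Filter.Tendsto (fun n => ‖ψ n (a * b) - ψ n a * ψ n b‖) Filter.atTop (nhds 0))
    (hψφ : ∀ c : S,
      Filter.Tendsto (fun n => ‖ψ n (c : B) - φ c‖) Filter.atTop (nhds 0)) :
    ∀ ε : ℝ, 0 < ε → ∀ F : Finset B, ∃ N : ℕ, 1 ≤ N ∧ ∀ n ≥ N, ∀ a ∈ F,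
      sSup {r : ℝ | ∃ τ : WeakDual ℂ A, IsTracialStateW τ ∧ r = ‖τ (ψ n a) - Λ τ a‖} < ε := by
  intro ε hε F
  have hF : ∀ᶠ n in atTop, ∀ a ∈ F, ∀ τ : WeakDual ℂ A, IsTracialStateW τ →
      ‖τ (ψ n a) - Λ τ a‖ < ε / 2 :=
    (eventually_all_finset F).2 fun a _ =>
      eventually_forall_norm_apply_sub_lt S E hES hE Λ hΛmaps φ hφΛ ψ hψ1
        (fun n _ hb => (hψcp n).map_nonneg hb)
        (fun b c => tendsto_zero_iff_norm_tendsto_zero.2 (hψmult b c))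
        (fun c => tendsto_zero_iff_norm_tendsto_zero.2 (hψφ c)) a (half_pos hε)
  obtain ⟨N, hN⟩ := eventually_atTop.1 hF
  refine ⟨N + 1, Nat.le_add_left 1 N, fun n hn a ha => ?_⟩
  refine (Real.sSup_le ?_ (half_pos hε).le).trans_lt (half_lt_self hε)
  rintro r ⟨τ, hτ, rfl⟩
  exact (hN n (by omega) a ha τ hτ).le

/-- `B` a separable unital C*-algebra, `S ⊆ B` a unital C*-subalgebra,
`E : B → B` a linear map with range in `S` with `τ (E b) = τ b` for every tracial state `τ`
of `B`; `A` a unital C*-algebra with `T(A) ≠ ∅`, `Λ : T(A) → T(B)` a surjective continuous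
affine map, `φ : S → A` a unital injective *-homomorphism with `τ (φ c) = Λ τ c` for all
`c ∈ S`, `τ ∈ T(A)`; `ψₙ : B → A` unital completely positive contractions which are
asymptotically multiplicative and asymptotically agree with `φ` on `S`.  Then for
every `ε > 0` and finite `F ⊆ B` there is `N ≥ 1` with
`sup_{τ ∈ T(A)} |τ (ψₙ a) - Λ τ a| < ε` for all `n ≥ N`, `a ∈ F`. -/
theorem statement4
    {B : Type*} [CStarAlgebra B] [PartialOrder B] [StarOrderedRing B]
    [TopologicalSpace.SeparableSpace B]
    {A : Type*} [CStarAlgebra A] [PartialOrder A] [StarOrderedRing A]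
    (S : StarSubalgebra ℂ B) (hS : IsClosed (S : Set B))
    (E : B →ₗ[ℂ] B) (hES : ∀ b : B, E b ∈ S)
    (hE : ∀ σ : WeakDual ℂ B, IsTracialStateW σ → ∀ b : B, σ b = σ (E b))
    (hTA : ∃ τ : WeakDual ℂ A, IsTracialStateW τ)
    (Λ : WeakDual ℂ A → WeakDual ℂ B)
    (hΛmaps : ∀ τ : WeakDual ℂ A, IsTracialStateW τ → IsTracialStateW (Λ τ))
    (hΛsurj : ∀ σ : WeakDual ℂ B, IsTracialStateW σ →
      ∃ τ : WeakDual ℂ A, IsTracialStateW τ ∧ Λ τ = σ)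
    (hΛcont : ContinuousOn Λ {τ | IsTracialStateW τ})
    (hΛaff : ∀ τ₁ τ₂ : WeakDual ℂ A, IsTracialStateW τ₁ → IsTracialStateW τ₂ →
      ∀ s : ℝ, 0 ≤ s → s ≤ 1 →
        Λ ((s : ℂ) • τ₁ + ((1 - s : ℝ) : ℂ) • τ₂)
          = (s : ℂ) • Λ τ₁ + ((1 - s : ℝ) : ℂ) • Λ τ₂)
    (φ : S →⋆ₐ[ℂ] A) (hφinj : Function.Injective φ)
    (hφΛ : ∀ τ : WeakDual ℂ A, IsTracialStateW τ → ∀ c : S, τ (φ c) = Λ τ (c : B))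
    (ψ : ℕ → B →L[ℂ] A)
    (hψ1 : ∀ n, ψ n 1 = 1)
    (hψcp : ∀ n, IsCompletelyPositive (ψ n))
    (hψnorm : ∀ n, ‖ψ n‖ ≤ 1)
    (hψmult : ∀ a b : B,
      Filter.Tendsto (fun n => ‖ψ n (a * b) - ψ n a * ψ n b‖) Filter.atTop (nhds 0))
    (hψφ : ∀ c : S,
      Filter.Tendsto (fun n => ‖ψ n (c : B) - φ c‖) Filter.atTop (nhds 0)) :
    ∀ ε : ℝ, 0 < ε → ∀ F : Finset B, ∃ N : ℕ, 1 ≤ N ∧ ∀ n ≥ N, ∀ a ∈ F,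
      sSup {r : ℝ | ∃ τ : WeakDual ℂ A, IsTracialStateW τ ∧ r = ‖τ (ψ n a) - Λ τ a‖} < ε :=
  statement4_general S E hES hE Λ hΛmaps φ hφΛ ψ hψ1 hψcp hψmult hψφ
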